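/- arXiv:cond-mat/0607688 — 2 statements merged into one kernel-verified Lean document; each statement's English description precedes it below -/
import Mathlib

section
/- For every N ≥ 1 and β > 0, the quenched free energies at sizes N and N+1 satisfy the exact finite-volume relation (N+1) α_{N+1}(β) = ln 2 + N α_N(β') + Ψ_N(β'^2, β'), where β' = β √(N/(N+1)) and Ψ_N(t,β) is the cavity function with cavity fields that are i.i.d. standard Gaussians independent of the N-spin couplings. -/
open MeasureTheory ProbabilityTheory Filter

noncomputable section

/-- The real spin value of a Boolean spin. -/
def spin (b : Bool) : ℝ := if b then 1 else -1

/-- SK Hamiltonian with zero external field: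
`H_N(σ,J) = -(1/√N) Σ_{i<j} J_{ij} σ_i σ_j`. -/
def hamSK (N : ℕ) (J : Fin N → Fin N → ℝ) (σ : Fin N → Bool) : ℝ :=
  -(1 / Real.sqrt N) * ∑ i : Fin N, ∑ j : Fin N,
    if i < j then J i j * spin (σ i) * spin (σ j) else 0

/-- Partition function `Z_N(β,J)`. -/
def partZ (N : ℕ) (β : ℝ) (J : Fin N → Fin N → ℝ) : ℝ :=
  ∑ σ : Fin N → Bool, Real.exp (-β * hamSK N J σ)

/-- Gibbs state `ω(f)`. -/
def gibbs (N : ℕ) (β : ℝ) (J : Fin N → Fin N → ℝ) (f : (Fin N → Bool) → ℝ) : ℝ :=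
  (∑ σ : Fin N → Bool, f σ * Real.exp (-β * hamSK N J σ)) / partZ N β J

/-- Replicated (product) Gibbs state `Ω(F)` over `s` replicas sharing the couplings. -/
def gibbsRep (N s : ℕ) (β : ℝ) (J : Fin N → Fin N → ℝ)
    (F : (Fin s → Fin N → Bool) → ℝ) : ℝ :=
  (∑ σ : Fin s → Fin N → Bool,
    F σ * ∏ a : Fin s, Real.exp (-β * hamSK N J (σ a))) / (partZ N β J) ^ s

/-- Product of i.i.d. standard Gaussians on the couplings. -/
def gaussJ (N : ℕ) : Measure (Fin N → Fin N → ℝ) :=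
  Measure.pi fun _ => Measure.pi fun _ => gaussianReal 0 1

/-- Quenched replicated Gibbs average `⟨F⟩_{N,β} = E[Ω(F)]`. -/
def quenched (N s : ℕ) (β : ℝ) (F : (Fin s → Fin N → Bool) → ℝ) : ℝ :=
  ∫ J, gibbsRep N s β J F ∂(gaussJ N)

/-- Overlap of two configurations `q = N⁻¹ Σ_i σ_i τ_i`. -/
def overlap (N : ℕ) (σ τ : Fin N → Bool) : ℝ :=
  (1 / (N : ℝ)) * ∑ i : Fin N, spin (σ i) * spin (τ i)

/-- Extended (cavity) partition function `Z_{N,t}(β,J)` with cavity fields `g`. -/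
def partZt (N : ℕ) (β t : ℝ) (J : Fin N → Fin N → ℝ) (g : Fin N → ℝ) : ℝ :=
  ∑ σ : Fin N → Bool,
    Real.exp (-β * hamSK N J σ + Real.sqrt (t / (N : ℝ)) * ∑ i : Fin N, g i * spin (σ i))

/-- Extended Gibbs state `ω_t(f)`. -/
def gibbsT (N : ℕ) (β t : ℝ) (J : Fin N → Fin N → ℝ) (g : Fin N → ℝ)
    (f : (Fin N → Bool) → ℝ) : ℝ :=
  (∑ σ : Fin N → Bool,
    f σ * Real.exp (-β * hamSK N J σ + Real.sqrt (t / (N : ℝ)) * ∑ i : Fin N, g i * spin (σ i)))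
    / partZt N β t J g

/-- Replicated extended Gibbs state `Ω_t(F)`. -/
def gibbsRepT (N s : ℕ) (β t : ℝ) (J : Fin N → Fin N → ℝ) (g : Fin N → ℝ)
    (F : (Fin s → Fin N → Bool) → ℝ) : ℝ :=
  (∑ σ : Fin s → Fin N → Bool,
    F σ * ∏ a : Fin s,
      Real.exp (-β * hamSK N J (σ a)
        + Real.sqrt (t / (N : ℝ)) * ∑ i : Fin N, g i * spin (σ a i)))
    / (partZt N β t J g) ^ s

/-- Product of i.i.d. standard Gaussians on the cavity fields. -/
def gaussCav (N : ℕ) : Measure (Fin N → ℝ) :=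
  Measure.pi fun _ => gaussianReal 0 1

/-- Quenched replicated extended Gibbs average `⟨F⟩_{N,t,β} = E[Ω_t(F)]`. -/
def quenchedT (N s : ℕ) (β t : ℝ) (F : (Fin s → Fin N → Bool) → ℝ) : ℝ :=
  ∫ x : (Fin N → Fin N → ℝ) × (Fin N → ℝ),
    gibbsRepT N s β t x.1 x.2 F ∂((gaussJ N).prod (gaussCav N))

/-- Cavity function `Ψ_N(t,β) = E[ln (Z_{N,t}/Z_N)]`. -/
def cavityFn (N : ℕ) (t β : ℝ) : ℝ :=
  ∫ x : (Fin N → Fin N → ℝ) × (Fin N → ℝ),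
    Real.log (partZt N β t x.1 x.2 / partZ N β x.1) ∂((gaussJ N).prod (gaussCav N))

/-- Quenched free energy density `α_N(β) = N⁻¹ E[ln Z_N(β,J)]`. -/
def alphaN (N : ℕ) (β : ℝ) : ℝ :=
  (N : ℝ)⁻¹ * ∫ J, Real.log (partZ N β J) ∂(gaussJ N)

/-!
Singling out the last spin, its couplings `J_{i,N+1}` act on the first `N` spins as an external
Gaussian field. Summing over `σ_{N+1} = ±1` and using the spin-flip symmetry of the remaining sum
gives, for every realisation of the couplings, `Z_{N+1}(β, J) = 2 Z_{N,β'²}(β', J', J_{·,N+1})`,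
because `β / √(N+1) = β' / √N` turns the `(N+1)`-spin normalisation into the `N`-spin one.
Restricting the couplings to `(J', J_{·,N+1})` maps the Gaussian law of the `(N+1)`-spin couplings
to the product of the `N`-spin couplings and the cavity fields, so taking logarithms and
expectations gives the identity; all logarithms are integrable since they are dominated by
`Σ |J_{ij}|`.
-/

section LogSumExp

variable {ι : Type*} [Fintype ι] [Nonempty ι]

lemma abs_log_sum_exp_le {x : ι → ℝ} {C : ℝ} (hx : ∀ i, |x i| ≤ C) :
    |Real.log (∑ i, Real.exp (x i))| ≤ Real.log (Fintype.card ι) + C := by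
  have hpos : 0 < ∑ i, Real.exp (x i) :=
    Finset.sum_pos (fun i _ ↦ Real.exp_pos _) Finset.univ_nonempty
  have hcard : 0 ≤ Real.log (Fintype.card ι) :=
    Real.log_nonneg (by simp [Nat.one_le_iff_ne_zero])
  obtain ⟨i₀⟩ := ‹Nonempty ι›
  have hlower : -C ≤ Real.log (∑ i, Real.exp (x i)) := by
    rw [Real.le_log_iff_exp_le hpos]
    calc Real.exp (-C) ≤ Real.exp (x i₀) := Real.exp_le_exp.2 (neg_le_of_abs_le (hx i₀))
      _ ≤ ∑ i, Real.exp (x i) :=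
        Finset.single_le_sum (fun i _ ↦ (Real.exp_pos (x i)).le) (Finset.mem_univ i₀)
  have hupper : Real.log (∑ i, Real.exp (x i)) ≤ Real.log (Fintype.card ι) + C := by
    rw [Real.log_le_iff_le_exp hpos, Real.exp_add, Real.exp_log (by positivity)]
    calc ∑ i, Real.exp (x i) ≤ ∑ _i : ι, Real.exp C :=
          Finset.sum_le_sum fun i _ ↦ Real.exp_le_exp.2 (le_of_abs_le (hx i))
      _ = Fintype.card ι * Real.exp C := by simp
  exact abs_le.2 ⟨by linarith, hupper⟩

lemma abs_log_sum_exp_add_div_le (x : ι → ℝ) {y : ι → ℝ} {C : ℝ} (hy : ∀ i, |y i| ≤ C) :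
    |Real.log ((∑ i, Real.exp (x i + y i)) / ∑ i, Real.exp (x i))| ≤ C := by
  have hpos : ∀ z : ι → ℝ, 0 < ∑ i, Real.exp (z i) := fun z ↦
    Finset.sum_pos (fun i _ ↦ Real.exp_pos _) Finset.univ_nonempty
  have hratio : 0 < (∑ i, Real.exp (x i + y i)) / ∑ i, Real.exp (x i) :=
    div_pos (hpos (x + y)) (hpos x)
  refine abs_le.2 ⟨?_, ?_⟩
  · rw [Real.le_log_iff_exp_le hratio, le_div_iff₀ (hpos x), Finset.mul_sum]
    refine Finset.sum_le_sum fun i _ ↦ ?_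
    rw [← Real.exp_add]
    exact Real.exp_le_exp.2 (by linarith [neg_le_of_abs_le (hy i)])
  · rw [Real.log_le_iff_le_exp hratio, div_le_iff₀ (hpos x), Finset.mul_sum]
    refine Finset.sum_le_sum fun i _ ↦ ?_
    rw [← Real.exp_add]
    exact Real.exp_le_exp.2 (by linarith [le_of_abs_le (hy i)])

end LogSumExp

def cavitySplit {X : Type*} {n : ℕ} (J : Fin (n + 1) → Fin (n + 1) → X) :
    (Fin n → Fin n → X) × (Fin n → X) :=
  (fun i j ↦ J i.castSucc j.castSucc, fun i ↦ J i.castSucc (Fin.last n))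

section Measure

variable {X : Type*} [MeasurableSpace X]

lemma measurePreserving_init_last (μ : Measure X) [SigmaFinite μ] (n : ℕ) :
    MeasurePreserving (fun x : Fin (n + 1) → X ↦ (Fin.init x, x (Fin.last n)))
      (Measure.pi fun _ ↦ μ) ((Measure.pi fun _ ↦ μ).prod μ) := by
  have h := Measure.measurePreserving_swap.comp
    (measurePreserving_piFinSuccAbove (fun _ ↦ μ) (Fin.last n))
  convert h using 1
  funext x
  simp

lemma measurePreserving_cavitySplit (μ : Measure X) [IsProbabilityMeasure μ] (n : ℕ) :
    MeasurePreserving (cavitySplit (X := X) (n := n))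
      (Measure.pi fun _ ↦ Measure.pi fun _ ↦ μ)
      ((Measure.pi fun _ ↦ Measure.pi fun _ ↦ μ).prod (Measure.pi fun _ ↦ μ)) :=
  (measurePreserving_arrowProdEquivProdArrow _ _ _ _ _).comp <|
    (measurePreserving_pi _ _ fun _ ↦ measurePreserving_init_last μ n).comp
      (measurePreserving_fst.comp (measurePreserving_init_last _ n))

end Measure

lemma spin_not (b : Bool) : spin (!b) = -spin b := by cases b <;> simp [spin]

lemma abs_spin (b : Bool) : |spin b| = 1 := by cases b <;> simp [spin]

lemma abs_sum_mul_spin_le {N : ℕ} (g : Fin N → ℝ) (σ : Fin N → Bool) :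
    |∑ i, g i * spin (σ i)| ≤ ∑ i, |g i| :=
  (Finset.abs_sum_le_sum_abs _ _).trans_eq (by simp [abs_mul, abs_spin])

lemma sum_mul_spin_not {N : ℕ} (g : Fin N → ℝ) (σ : Fin N → Bool) :
    ∑ i, g i * spin (!σ i) = -∑ i, g i * spin (σ i) := by
  simp [spin_not]

def bondSum (N : ℕ) (J : Fin N → Fin N → ℝ) (σ : Fin N → Bool) : ℝ :=
  ∑ i, ∑ j, if i < j then J i j * spin (σ i) * spin (σ j) else 0

lemma hamSK_eq (N : ℕ) (J : Fin N → Fin N → ℝ) (σ : Fin N → Bool) :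
    hamSK N J σ = -(1 / Real.sqrt N) * bondSum N J σ := rfl

lemma bondSum_not (N : ℕ) (J : Fin N → Fin N → ℝ) (σ : Fin N → Bool) :
    bondSum N J (fun i ↦ !σ i) = bondSum N J σ := by
  simp [bondSum, spin_not]

lemma abs_bondSum_le (N : ℕ) (J : Fin N → Fin N → ℝ) (σ : Fin N → Bool) :
    |bondSum N J σ| ≤ ∑ i, ∑ j, |J i j| := by
  refine (Finset.abs_sum_le_sum_abs _ _).trans (Finset.sum_le_sum fun i _ ↦ ?_)
  refine (Finset.abs_sum_le_sum_abs _ _).trans (Finset.sum_le_sum fun j _ ↦ ?_)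
  split_ifs <;> simp [abs_mul, abs_spin]

lemma abs_hamSK_le (N : ℕ) (J : Fin N → Fin N → ℝ) (σ : Fin N → Bool) :
    |hamSK N J σ| ≤ 1 / Real.sqrt N * ∑ i, ∑ j, |J i j| := by
  rw [hamSK_eq, abs_mul, abs_neg, abs_of_nonneg (by positivity)]
  exact mul_le_mul_of_nonneg_left (abs_bondSum_le N J σ) (by positivity)

@[fun_prop]
lemma continuous_bondSum (N : ℕ) (σ : Fin N → Bool) : Continuous fun J ↦ bondSum N J σ := by
  unfold bondSum
  refine continuous_finsetSum _ fun i _ ↦ continuous_finsetSum _ fun j _ ↦ ?_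
  split_ifs <;> fun_prop

lemma bondSum_snoc (N : ℕ) (J : Fin (N + 1) → Fin (N + 1) → ℝ) (σ : Fin N → Bool) (b : Bool) :
    bondSum (N + 1) J (Fin.snoc σ b)
      = bondSum N (fun i j ↦ J i.castSucc j.castSucc) σ
        + spin b * ∑ i, J i.castSucc (Fin.last N) * spin (σ i) := by
  simp only [bondSum, Fin.sum_univ_castSucc, Fin.snoc_castSucc, Fin.snoc_last,
    Fin.castSucc_lt_castSucc_iff, Fin.castSucc_lt_last, if_true, lt_irrefl, if_false,
    Fin.not_lt.2 (Fin.le_last _)]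
  rw [Finset.sum_add_distrib, mul_comm (spin b), Finset.sum_mul]
  simp

lemma sum_exp_bondSum_add_neg_field (N : ℕ) (J : Fin N → Fin N → ℝ) (g : Fin N → ℝ) (a s : ℝ) :
    ∑ σ : Fin N → Bool, Real.exp (a * bondSum N J σ + -s * ∑ i, g i * spin (σ i))
      = ∑ σ : Fin N → Bool, Real.exp (a * bondSum N J σ + s * ∑ i, g i * spin (σ i)) := by
  have hflip : Function.Involutive fun (σ : Fin N → Bool) i ↦ !σ i := fun σ ↦ by simp
  refine Fintype.sum_bijective _ hflip.bijective _ _ fun σ ↦ ?_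
  simp [bondSum_not, sum_mul_spin_not]

lemma partZ_pos (N : ℕ) (β : ℝ) (J : Fin N → Fin N → ℝ) : 0 < partZ N β J :=
  Finset.sum_pos (fun _ _ ↦ Real.exp_pos _) Finset.univ_nonempty

lemma partZt_pos (N : ℕ) (β t : ℝ) (J : Fin N → Fin N → ℝ) (g : Fin N → ℝ) :
    0 < partZt N β t J g :=
  Finset.sum_pos (fun _ _ ↦ Real.exp_pos _) Finset.univ_nonempty

lemma continuous_partZ (N : ℕ) (β : ℝ) : Continuous (partZ N β) := by
  unfold partZ
  simp only [hamSK_eq]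
  fun_prop

lemma continuous_partZt (N : ℕ) (β t : ℝ) :
    Continuous fun x : (Fin N → Fin N → ℝ) × (Fin N → ℝ) ↦ partZt N β t x.1 x.2 := by
  unfold partZt
  simp only [hamSK_eq]
  fun_prop

lemma partZ_succ (N : ℕ) (β : ℝ) (J : Fin (N + 1) → Fin (N + 1) → ℝ) :
    partZ (N + 1) β J
      = 2 * partZt N (β * Real.sqrt (N / (N + 1))) ((β * Real.sqrt (N / (N + 1))) ^ 2)
          (cavitySplit J).1 (cavitySplit J).2 := by
  rcases N.eq_zero_or_pos with rfl | hN
  · simp [partZ, partZt, hamSK]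
  set c := β / Real.sqrt (N + 1) with hc
  set S : (Fin N → Bool) → ℝ := fun σ ↦ ∑ i, (cavitySplit J).2 i * spin (σ i)
  have hN' : (0 : ℝ) < N := by exact_mod_cast hN
  have hcoupling : β * Real.sqrt (N / (N + 1)) / Real.sqrt N = c := by
    rw [Real.sqrt_div hN'.le, hc]
    field_simp
  have hfield : Real.sqrt ((β * Real.sqrt (N / (N + 1))) ^ 2 / N) = |c| := by
    rw [Real.sqrt_div (sq_nonneg _), Real.sqrt_sq_eq_abs, ← hcoupling, abs_div,
      abs_of_pos (Real.sqrt_pos.2 hN')]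
  have hbond : ∀ σ, -(β * Real.sqrt (N / (N + 1))) * hamSK N (cavitySplit J).1 σ
      = c * bondSum N (cavitySplit J).1 σ := fun σ ↦ by
    rw [hamSK_eq, ← hcoupling]
    ring
  have hflip : ∑ σ : Fin N → Bool, Real.exp (c * bondSum N (cavitySplit J).1 σ + -c * S σ)
      = ∑ σ : Fin N → Bool, Real.exp (c * bondSum N (cavitySplit J).1 σ + c * S σ) :=
    sum_exp_bondSum_add_neg_field _ _ _ _ _
  calc partZ (N + 1) β J
      = ∑ b : Bool, ∑ σ : Fin N → Bool,
          Real.exp (c * bondSum N (cavitySplit J).1 σ + spin b * c * S σ) := by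
        rw [partZ, ← (Fin.snocEquiv fun _ ↦ Bool).sum_comp, Fintype.sum_prod_type]
        refine Finset.sum_congr rfl fun b _ ↦ Finset.sum_congr rfl fun σ _ ↦ ?_
        simp only [Fin.snocEquiv, Equiv.coe_fn_mk, hamSK_eq, bondSum_snoc, S, cavitySplit, hc]
        push_cast
        ring_nf
    _ = 2 * ∑ σ : Fin N → Bool, Real.exp (c * bondSum N (cavitySplit J).1 σ + |c| * S σ) := by
        rw [Fintype.sum_bool]
        rcases abs_cases c with ⟨h, -⟩ | ⟨h, -⟩ <;> simp [spin, h, ← hflip] <;> ring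
    _ = _ := by
        simp only [partZt, hfield, hbond, S]

instance (N : ℕ) : IsProbabilityMeasure (gaussJ N) := by unfold gaussJ; infer_instance

instance (N : ℕ) : IsProbabilityMeasure (gaussCav N) := by unfold gaussCav; infer_instance

lemma integrable_sum_abs_gaussJ (N : ℕ) :
    Integrable (fun J : Fin N → Fin N → ℝ ↦ ∑ i, ∑ j, |J i j|) (gaussJ N) := by
  refine integrable_finsetSum _ fun i _ ↦ integrable_finsetSum _ fun j _ ↦ ?_
  have h := (measurePreserving_eval (fun _ ↦ gaussianReal 0 1) j).comp
    (measurePreserving_eval (fun _ ↦ Measure.pi fun _ ↦ gaussianReal 0 1) i)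
  exact (h.integrable_comp continuous_abs.aestronglyMeasurable).2 IsGaussian.integrable_id.abs

lemma integrable_sum_abs_gaussCav (N : ℕ) :
    Integrable (fun g : Fin N → ℝ ↦ ∑ i, |g i|) (gaussCav N) :=
  integrable_finsetSum _ fun i _ ↦
    ((measurePreserving_eval (fun _ ↦ gaussianReal 0 1) i).integrable_comp
      continuous_abs.aestronglyMeasurable).2 IsGaussian.integrable_id.abs

lemma integrable_log_partZ (N : ℕ) (β : ℝ) :
    Integrable (fun J ↦ Real.log (partZ N β J)) (gaussJ N) := by
  refine ((integrable_const (Real.log (Fintype.card (Fin N → Bool)))).add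
    ((integrable_sum_abs_gaussJ N).const_mul (|β| * (1 / Real.sqrt N)))).mono'
    ((continuous_partZ N β).log fun J ↦ (partZ_pos N β J).ne').aestronglyMeasurable
    (ae_of_all _ fun J ↦ abs_log_sum_exp_le fun σ ↦ ?_)
  rw [abs_mul, abs_neg]
  exact (mul_le_mul_of_nonneg_left (abs_hamSK_le N J σ) (abs_nonneg β)).trans_eq
    (mul_assoc _ _ _).symm

lemma integrable_log_partZt_div_partZ (N : ℕ) (β t : ℝ) :
    Integrable (fun x : (Fin N → Fin N → ℝ) × (Fin N → ℝ) ↦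
        Real.log (partZt N β t x.1 x.2 / partZ N β x.1))
      ((gaussJ N).prod (gaussCav N)) := by
  refine (((integrable_sum_abs_gaussCav N).const_mul (Real.sqrt (t / N))).comp_snd
    (gaussJ N)).mono' ?_ (ae_of_all _ fun x ↦ abs_log_sum_exp_add_div_le _ fun σ ↦ ?_)
  · exact ((continuous_partZt N β t).div ((continuous_partZ N β).comp continuous_fst)
      fun x ↦ (partZ_pos N β x.1).ne').log (fun x ↦ (div_pos (partZt_pos N β t x.1 x.2)
      (partZ_pos N β x.1)).ne') |>.aestronglyMeasurable
  · rw [abs_mul, abs_of_nonneg (Real.sqrt_nonneg _)]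
    exact mul_le_mul_of_nonneg_left (abs_sum_mul_spin_le x.2 σ) (Real.sqrt_nonneg _)

lemma natCast_mul_alphaN (N : ℕ) (β : ℝ) :
    (N : ℝ) * alphaN N β = ∫ J, Real.log (partZ N β J) ∂(gaussJ N) := by
  rcases eq_or_ne N 0 with rfl | hN
  · simp [partZ, hamSK]
  rw [alphaN, ← mul_assoc, mul_inv_cancel₀ (Nat.cast_ne_zero.2 hN), one_mul]

lemma log_two_mul_partZt (N : ℕ) (β t : ℝ) (J : Fin N → Fin N → ℝ) (g : Fin N → ℝ) :
    Real.log (2 * partZt N β t J g)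
      = Real.log 2 + Real.log (partZ N β J) + Real.log (partZt N β t J g / partZ N β J) := by
  rw [Real.log_mul two_ne_zero (partZt_pos ..).ne',
    Real.log_div (partZt_pos ..).ne' (partZ_pos ..).ne']
  ring

lemma integral_gaussJ_succ (N : ℕ) {F : (Fin N → Fin N → ℝ) × (Fin N → ℝ) → ℝ}
    (hF : AEStronglyMeasurable F ((gaussJ N).prod (gaussCav N))) :
    ∫ J, F (cavitySplit J) ∂(gaussJ (N + 1)) = ∫ x, F x ∂((gaussJ N).prod (gaussCav N)) := by
  have hmp : MeasurePreserving cavitySplit (gaussJ (N + 1)) ((gaussJ N).prod (gaussCav N)) :=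
    measurePreserving_cavitySplit (gaussianReal 0 1) N
  rw [← integral_map hmp.aemeasurable (hmp.map_eq ▸ hF), hmp.map_eq]

theorem free_energy_cavity_recursion_general (N : ℕ) (β : ℝ) :
    ((N : ℝ) + 1) * alphaN (N + 1) β
      = Real.log 2
        + (N : ℝ) * alphaN N (β * Real.sqrt ((N : ℝ) / ((N : ℝ) + 1)))
        + cavityFn N ((β * Real.sqrt ((N : ℝ) / ((N : ℝ) + 1))) ^ 2)
            (β * Real.sqrt ((N : ℝ) / ((N : ℝ) + 1))) := by
  nth_rw 1 [← Nat.cast_add_one]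
  rw [natCast_mul_alphaN, natCast_mul_alphaN, cavityFn]
  simp_rw [partZ_succ, log_two_mul_partZt]
  set β' := β * Real.sqrt ((N : ℝ) / ((N : ℝ) + 1))
  have hZ := (integrable_log_partZ N β').comp_fst (gaussCav N)
  have hratio := integrable_log_partZt_div_partZ N β' (β' ^ 2)
  have hconstZ : Integrable (fun x ↦ Real.log 2 + Real.log (partZ N β' x.1))
      ((gaussJ N).prod (gaussCav N)) := (integrable_const _).add hZ
  refine (integral_gaussJ_succ N (hconstZ.add hratio).aestronglyMeasurable).trans ?_
  rw [Pi.add_def, integral_add hconstZ hratio, integral_add (integrable_const _) hZ,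
    integral_const, integral_fun_fst fun J ↦ Real.log (partZ N β' J)]
  simp

/-- the exact finite-volume relation
`(N+1) α_{N+1}(β) = ln 2 + N α_N(β') + Ψ_N(β'², β')` with `β' = β √(N/(N+1))`. -/
theorem free_energy_cavity_recursion (N : ℕ) (hN : 1 ≤ N) (β : ℝ) (hβ : 0 < β) :
    ((N : ℝ) + 1) * alphaN (N + 1) β
      = Real.log 2
        + (N : ℝ) * alphaN N (β * Real.sqrt ((N : ℝ) / ((N : ℝ) + 1)))
        + cavityFn N ((β * Real.sqrt ((N : ℝ) / ((N : ℝ) + 1))) ^ 2)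
            (β * Real.sqrt ((N : ℝ) / ((N : ℝ) + 1))) :=
  free_energy_cavity_recursion_general N β
end
end

section
/- (Exact filling identity underlying Theorem 2.) Fix N ≥ 1, β > 0, s ≥ 2, and let Q(σ^1,…,σ^s) = Π_{1≤c<d≤s} q_{cd}^{n_{cd}} be a monomial in the overlaps of s replicas, with d_c = Σ_{e≠c} n_{ce} the degree of replica c. Let β' = β√(N/(N+1)) and t' = β^2 N/(N+1), and let the extended N-spin quenched state ⟨·⟩_{N,t',β'} use the cavity fields J_i := J_{i,N+1} coming from the couplings of an (N+1)-spin SK system. Then ⟨Q⟩_{N,t',β'} = E[Ω_{N+1,β}(Q^{(N)} · Π_{c=1}^s (σ_{N+1}^c)^{d_c})], where Q^{(N)} denotes the same monomial evaluated with the overlaps q_{cd} = N^{−1} Σ_{i=1}^N σ_i^c σ_i^d of the first N spins of the (N+1)-spin system. In particular, if Q is fillable with only replicas a and b of odd degree, then ⟨Q⟩_{N,t',β'} = E[Ω_{N+1,β}(Q^{(N)} σ_{N+1}^a σ_{N+1}^b)]. -/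
open MeasureTheory ProbabilityTheory Filter

noncomputable section

/-- The monomial `Π_{c<d} q_{cd}^{n_{cd}}` in the overlaps of `s` replicas. -/
def overlapMonomial (N s : ℕ) (n : Fin s → Fin s → ℕ)
    (σ : Fin s → Fin N → Bool) : ℝ :=
  ∏ c : Fin s, ∏ d : Fin s,
    if c < d then (overlap N (σ c) (σ d)) ^ (n c d) else 1

/-- The total degree `d_c = Σ_{e ≠ c} n_{ce}` of replica `c` in the monomial. -/
def replicaDegree (s : ℕ) (n : Fin s → Fin s → ℕ) (c : Fin s) : ℕ :=
  ∑ e : Fin s, ((if c < e then n c e else 0) + (if e < c then n e c else 0))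

/-- The same monomial evaluated with the overlaps of the first `N` spins of an
`(N+1)`-spin system. -/
def overlapMonomialRes (N s : ℕ) (n : Fin s → Fin s → ℕ)
    (σ : Fin s → Fin (N + 1) → Bool) : ℝ :=
  ∏ c : Fin s, ∏ d : Fin s,
    if c < d then
      ((1 / (N : ℝ)) * ∑ i : Fin N, spin (σ c i.castSucc) * spin (σ d i.castSucc))
        ^ (n c d)
    else 1

lemma spin_mul_self (b : Bool) : spin b * spin b = 1 := by
  cases b <;> simp [spin]

lemma spin_sq (b : Bool) : spin b ^ 2 = 1 := by
  cases b <;> simp [spin]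

lemma spin_beq (a b : Bool) : spin (a == b) = spin a * spin b := by
  cases a <;> cases b <;> norm_num [spin]

lemma spin_pow_even {k : ℕ} (hk : Even k) (b : Bool) : spin b ^ k = 1 := by
  obtain ⟨m, rfl⟩ := hk
  rw [← two_mul, pow_mul, spin_sq, one_pow]

lemma spin_pow_odd {k : ℕ} (hk : Odd k) (b : Bool) : spin b ^ k = spin b := by
  obtain ⟨m, rfl⟩ := hk
  rw [pow_succ, pow_mul, spin_sq, one_pow, one_mul]

lemma beq_involutive (e : Bool) : Function.Involutive (fun b => b == e) := by
  intro b; cases b <;> cases e <;> rfl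

lemma ham_decomp (N : ℕ) (hN : 1 ≤ N) (J : Fin (N+1) → Fin (N+1) → ℝ)
    (σ : Fin (N+1) → Bool) :
    (1 / Real.sqrt ((N:ℝ)+1)) * hamSK N (fun i j => J i.castSucc j.castSucc) (fun i => σ i.castSucc)
      * Real.sqrt (N:ℝ)
      - (1 / Real.sqrt ((N:ℝ)+1)) * spin (σ (Fin.last N))
        * ∑ i : Fin N, J i.castSucc (Fin.last N) * spin (σ i.castSucc)
    = hamSK (N+1) J σ := by
  have hS : (∑ i : Fin (N+1), ∑ j : Fin (N+1),
        if i < j then J i j * spin (σ i) * spin (σ j) else 0)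
      = (∑ i : Fin N, ∑ j : Fin N,
          if i < j then J i.castSucc j.castSucc * spin (σ i.castSucc) * spin (σ j.castSucc) else 0)
        + spin (σ (Fin.last N)) * ∑ i : Fin N, J i.castSucc (Fin.last N) * spin (σ i.castSucc) := by
    have hlast : ∀ j : Fin N, ¬ (Fin.last N < j.castSucc) := fun j => not_lt.2 (j.castSucc.le_last)
    simp only [Fin.sum_univ_castSucc, Fin.castSucc_lt_castSucc_iff, Fin.castSucc_lt_last,
      if_true, lt_irrefl, if_false, hlast, Finset.sum_const_zero, add_zero]
    rw [Finset.sum_add_distrib, Finset.mul_sum]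
    congr 1
    exact Finset.sum_congr rfl fun i _ => by ring
  have hN0 : (0:ℝ) < (N:ℝ) := by exact_mod_cast hN
  have hsN : Real.sqrt (N:ℝ) ≠ 0 := by positivity
  simp only [hamSK, hS]
  field_simp
  push_cast
  ring

lemma exp_decomp (N : ℕ) (hN : 1 ≤ N) (β : ℝ) (hβ : 0 < β)
    (J : Fin (N+1) → Fin (N+1) → ℝ) (σ : Fin (N+1) → Bool) :
    -β * hamSK (N+1) J σ
      = -(β * Real.sqrt ((N:ℝ)/((N:ℝ)+1)))
          * hamSK N (fun i j => J i.castSucc j.castSucc) (fun i => σ i.castSucc)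
        + Real.sqrt ((β^2 * (N:ℝ) / ((N:ℝ)+1)) / (N:ℝ))
          * (spin (σ (Fin.last N))
              * ∑ i : Fin N, J i.castSucc (Fin.last N) * spin (σ i.castSucc)) := by
  have hN0 : (0:ℝ) < (N:ℝ) := by exact_mod_cast hN
  have h1 : Real.sqrt ((N:ℝ)/((N:ℝ)+1)) = Real.sqrt (N:ℝ) / Real.sqrt ((N:ℝ)+1) :=
    Real.sqrt_div hN0.le _
  have h2 : Real.sqrt ((β^2 * (N:ℝ) / ((N:ℝ)+1)) / (N:ℝ))
      = β / Real.sqrt ((N:ℝ)+1) := by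
    have : (β^2 * (N:ℝ) / ((N:ℝ)+1)) / (N:ℝ) = β^2 / ((N:ℝ)+1) := by
      field_simp
    rw [this, Real.sqrt_div (sq_nonneg β), Real.sqrt_sq hβ.le]
  rw [← ham_decomp N hN J σ, h1, h2]
  ring

lemma flip_ham (N : ℕ) (J : Fin N → Fin N → ℝ) (τ : Fin N → Bool) (e : Bool) :
    hamSK N J (fun i => τ i == e) = hamSK N J τ := by
  unfold hamSK
  congr 1
  refine Finset.sum_congr rfl fun i _ => Finset.sum_congr rfl fun j _ => ?_
  split
  · rw [spin_beq, spin_beq]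
    calc J i j * (spin (τ i) * spin e) * (spin (τ j) * spin e)
        = J i j * spin (τ i) * spin (τ j) * (spin e * spin e) := by ring
      _ = J i j * spin (τ i) * spin (τ j) := by rw [spin_mul_self, mul_one]
  · rfl

lemma flip_cav (N : ℕ) (g : Fin N → ℝ) (τ : Fin N → Bool) (e : Bool) :
    (∑ i : Fin N, g i * spin (τ i == e)) = spin e * ∑ i : Fin N, g i * spin (τ i) := by
  rw [Finset.mul_sum]
  exact Finset.sum_congr rfl fun i _ => by rw [spin_beq]; ring

lemma monomial_to_degree (s : ℕ) (n : Fin s → Fin s → ℕ) (x : Fin s → ℝ) :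
    (∏ c : Fin s, ∏ d : Fin s, if c < d then (x c * x d) ^ (n c d) else 1)
      = ∏ c : Fin s, x c ^ replicaDegree s n c := by
  have step : ∀ c d : Fin s, (if c < d then (x c * x d) ^ (n c d) else 1)
      = x c ^ (if c < d then n c d else 0) * x d ^ (if c < d then n c d else 0) := by
    intro c d; split <;> simp [mul_pow]
  calc (∏ c : Fin s, ∏ d : Fin s, if c < d then (x c * x d) ^ (n c d) else 1)
      = ∏ c : Fin s, ∏ d : Fin s,
          x c ^ (if c < d then n c d else 0) * x d ^ (if c < d then n c d else 0) := by
        simp only [step]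
    _ = (∏ c : Fin s, ∏ d : Fin s, x c ^ (if c < d then n c d else 0))
        * ∏ c : Fin s, ∏ d : Fin s, x d ^ (if c < d then n c d else 0) := by
        rw [← Finset.prod_mul_distrib]
        exact Finset.prod_congr rfl fun c _ => Finset.prod_mul_distrib
    _ = (∏ c : Fin s, ∏ d : Fin s, x c ^ (if c < d then n c d else 0))
        * ∏ c : Fin s, ∏ d : Fin s, x c ^ (if d < c then n d c else 0) := by
        congr 1; exact Finset.prod_comm
    _ = ∏ c : Fin s, ∏ d : Fin s,
          x c ^ ((if c < d then n c d else 0) + (if d < c then n d c else 0)) := by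
        rw [← Finset.prod_mul_distrib]
        refine Finset.prod_congr rfl fun c _ => ?_
        rw [← Finset.prod_mul_distrib]
        exact Finset.prod_congr rfl fun d _ => (pow_add _ _ _).symm
    _ = ∏ c : Fin s, x c ^ replicaDegree s n c := by
        refine Finset.prod_congr rfl fun c _ => ?_
        rw [replicaDegree, ← Finset.prod_pow_eq_pow_sum]

lemma monomialRes_flip (N s : ℕ) (n : Fin s → Fin s → ℕ)
    (τ : Fin s → Fin N → Bool) (ε : Fin s → Bool) :
    overlapMonomialRes N s n (fun c => Fin.snoc (fun i => τ c i == ε c) (ε c))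
      = (∏ c : Fin s, spin (ε c) ^ replicaDegree s n c) * overlapMonomial N s n τ := by
  have key : ∀ c d : Fin s,
      ((1 / (N:ℝ)) * ∑ i : Fin N,
          spin ((Fin.snoc (fun i => τ c i == ε c) (ε c) : Fin (N+1) → Bool) i.castSucc)
            * spin ((Fin.snoc (fun i => τ d i == ε d) (ε d) : Fin (N+1) → Bool) i.castSucc))
        = (spin (ε c) * spin (ε d)) * overlap N (τ c) (τ d) := by
    intro c d
    simp only [Fin.snoc_castSucc, spin_beq]
    have : (∑ i : Fin N, (spin (τ c i) * spin (ε c)) * (spin (τ d i) * spin (ε d)))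
        = (spin (ε c) * spin (ε d)) * ∑ i : Fin N, spin (τ c i) * spin (τ d i) := by
      rw [Finset.mul_sum]
      exact Finset.sum_congr rfl fun i _ => by ring
    rw [this, overlap]
    ring
  unfold overlapMonomialRes overlapMonomial
  calc (∏ c : Fin s, ∏ d : Fin s,
        if c < d then
          ((1 / (N:ℝ)) * ∑ i : Fin N,
            spin ((Fin.snoc (fun i => τ c i == ε c) (ε c) : Fin (N+1) → Bool) i.castSucc)
              * spin ((Fin.snoc (fun i => τ d i == ε d) (ε d) : Fin (N+1) → Bool) i.castSucc))
            ^ (n c d)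
        else 1)
      = ∏ c : Fin s, ∏ d : Fin s,
          (if c < d then (spin (ε c) * spin (ε d)) ^ (n c d) else 1)
            * (if c < d then (overlap N (τ c) (τ d)) ^ (n c d) else 1) := by
        refine Finset.prod_congr rfl fun c _ => Finset.prod_congr rfl fun d _ => ?_
        rw [key c d]
        split
        · rw [mul_pow]
        · rw [mul_one]
    _ = (∏ c : Fin s, ∏ d : Fin s, if c < d then (spin (ε c) * spin (ε d)) ^ (n c d) else 1)
        * ∏ c : Fin s, ∏ d : Fin s, if c < d then (overlap N (τ c) (τ d)) ^ (n c d) else 1 := by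
        rw [← Finset.prod_mul_distrib]
        exact Finset.prod_congr rfl fun c _ => Finset.prod_mul_distrib
    _ = (∏ c : Fin s, spin (ε c) ^ replicaDegree s n c)
        * ∏ c : Fin s, ∏ d : Fin s, if c < d then (overlap N (τ c) (τ d)) ^ (n c d) else 1 := by
        rw [monomial_to_degree]

/-- Equivalence splitting off the last spin of each replica. -/
def repEquiv (N s : ℕ) : ((Fin s → Fin N → Bool) × (Fin s → Bool)) ≃ (Fin s → Fin (N+1) → Bool) where
  toFun p := fun c => Fin.snoc (p.1 c) (p.2 c)
  invFun σ := (fun c i => σ c i.castSucc, fun c => σ c (Fin.last N))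
  left_inv p := by
    refine Prod.ext ?_ ?_
    · funext c i; simp
    · funext c; simp
  right_inv σ := by
    funext c i
    exact Fin.lastCases (by simp) (fun j => by simp) i

/-- Equivalence splitting off the last spin. -/
def snocEquiv (N : ℕ) : ((Fin N → Bool) × Bool) ≃ (Fin (N+1) → Bool) where
  toFun p := Fin.snoc p.1 p.2
  invFun σ := (fun i => σ i.castSucc, σ (Fin.last N))
  left_inv p := by
    refine Prod.ext ?_ ?_
    · funext i; simp
    · simp
  right_inv σ := by
    funext i
    exact Fin.lastCases (by simp) (fun j => by simp) i

lemma partZ_cavity (N : ℕ) (hN : 1 ≤ N) (β : ℝ) (hβ : 0 < β)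
    (J : Fin (N+1) → Fin (N+1) → ℝ) :
    partZ (N+1) β J
      = 2 * partZt N (β * Real.sqrt ((N:ℝ)/((N:ℝ)+1))) (β^2 * (N:ℝ)/((N:ℝ)+1))
          (fun i j => J i.castSucc j.castSucc) (fun i => J i.castSucc (Fin.last N)) := by
  unfold partZ partZt
  rw [← Equiv.sum_comp (snocEquiv N) (fun σ => Real.exp (-β * hamSK (N+1) J σ)),
    Fintype.sum_prod_type, Finset.sum_comm]
  have inner : ∀ ε : Bool,
      (∑ τ : Fin N → Bool, Real.exp (-β * hamSK (N+1) J (snocEquiv N (τ, ε))))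
      = ∑ τ : Fin N → Bool,
          Real.exp (-(β * Real.sqrt ((N:ℝ)/((N:ℝ)+1)))
              * hamSK N (fun i j => J i.castSucc j.castSucc) τ
            + Real.sqrt ((β^2 * (N:ℝ)/((N:ℝ)+1)) / (N:ℝ))
              * ∑ i : Fin N, J i.castSucc (Fin.last N) * spin (τ i)) := by
    intro ε
    have hinv : Function.Involutive (fun τ : Fin N → Bool => fun i => τ i == ε) := by
      intro τ; funext i; exact beq_involutive ε (τ i)
    rw [← hinv.bijective.sum_comp
      (fun τ => Real.exp (-β * hamSK (N+1) J (snocEquiv N (τ, ε))))]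
    refine Finset.sum_congr rfl fun τ _ => ?_
    congr 1
    rw [exp_decomp N hN β hβ J]
    have h1 : (fun i : Fin N =>
        (Fin.snoc (fun i => τ i == ε) ε : Fin (N+1) → Bool) i.castSucc)
        = fun i => τ i == ε := by funext i; simp
    simp only [snocEquiv, Equiv.coe_fn_mk, h1, Fin.snoc_last, Fin.snoc_castSucc]
    rw [flip_ham, flip_cav, ← mul_assoc (spin ε), spin_mul_self, one_mul]
  simp only [inner]
  rw [Fintype.sum_bool, two_mul]

lemma num_cavity (N s : ℕ) (hN : 1 ≤ N) (β : ℝ) (hβ : 0 < β)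
    (n : Fin s → Fin s → ℕ) (J : Fin (N+1) → Fin (N+1) → ℝ) :
    (∑ σ : Fin s → Fin (N+1) → Bool,
      (overlapMonomialRes N s n σ * ∏ c : Fin s, spin (σ c (Fin.last N)) ^ replicaDegree s n c)
        * ∏ c : Fin s, Real.exp (-β * hamSK (N+1) J (σ c)))
    = 2^s * ∑ τ : Fin s → Fin N → Bool,
        overlapMonomial N s n τ * ∏ c : Fin s,
          Real.exp (-(β * Real.sqrt ((N:ℝ)/((N:ℝ)+1)))
              * hamSK N (fun i j => J i.castSucc j.castSucc) (τ c)
            + Real.sqrt ((β^2 * (N:ℝ)/((N:ℝ)+1)) / (N:ℝ))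
              * ∑ i : Fin N, J i.castSucc (Fin.last N) * spin (τ c i)) := by
  rw [← Equiv.sum_comp (repEquiv N s)
    (fun σ => (overlapMonomialRes N s n σ
        * ∏ c : Fin s, spin (σ c (Fin.last N)) ^ replicaDegree s n c)
      * ∏ c : Fin s, Real.exp (-β * hamSK (N+1) J (σ c))),
    Fintype.sum_prod_type, Finset.sum_comm]
  have inner : ∀ ε : Fin s → Bool,
      (∑ τ : Fin s → Fin N → Bool,
        (overlapMonomialRes N s n (repEquiv N s (τ, ε))
          * ∏ c : Fin s, spin ((repEquiv N s (τ, ε)) c (Fin.last N)) ^ replicaDegree s n c)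
        * ∏ c : Fin s, Real.exp (-β * hamSK (N+1) J ((repEquiv N s (τ, ε)) c)))
      = ∑ τ : Fin s → Fin N → Bool,
          overlapMonomial N s n τ * ∏ c : Fin s,
            Real.exp (-(β * Real.sqrt ((N:ℝ)/((N:ℝ)+1)))
                * hamSK N (fun i j => J i.castSucc j.castSucc) (τ c)
              + Real.sqrt ((β^2 * (N:ℝ)/((N:ℝ)+1)) / (N:ℝ))
                * ∑ i : Fin N, J i.castSucc (Fin.last N) * spin (τ c i)) := by
    intro ε
    have hinv : Function.Involutive
        (fun τ : Fin s → Fin N → Bool => fun c i => τ c i == ε c) := by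
      intro τ; funext c i; exact beq_involutive (ε c) (τ c i)
    rw [← hinv.bijective.sum_comp _]
    refine Finset.sum_congr rfl fun τ _ => ?_
    have hrep : (repEquiv N s ((fun c i => τ c i == ε c), ε))
        = fun c => Fin.snoc (fun i => τ c i == ε c) (ε c) := rfl
    rw [hrep, monomialRes_flip]
    have hlast : ∀ c : Fin s,
        (Fin.snoc (fun i => τ c i == ε c) (ε c) : Fin (N+1) → Bool) (Fin.last N) = ε c :=
      fun c => Fin.snoc_last _ _
    have cancel : (∏ c : Fin s, spin (ε c) ^ replicaDegree s n c)
        * (∏ c : Fin s, spin (ε c) ^ replicaDegree s n c) = 1 := by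
      rw [← Finset.prod_mul_distrib]
      refine Finset.prod_eq_one fun c _ => ?_
      rw [← pow_add]
      exact spin_pow_even ⟨_, rfl⟩ _
    have hexp : ∀ c : Fin s,
        Real.exp (-β * hamSK (N+1) J (Fin.snoc (fun i => τ c i == ε c) (ε c)))
        = Real.exp (-(β * Real.sqrt ((N:ℝ)/((N:ℝ)+1)))
              * hamSK N (fun i j => J i.castSucc j.castSucc) (τ c)
            + Real.sqrt ((β^2 * (N:ℝ)/((N:ℝ)+1)) / (N:ℝ))
              * ∑ i : Fin N, J i.castSucc (Fin.last N) * spin (τ c i)) := by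
      intro c
      congr 1
      rw [exp_decomp N hN β hβ J]
      have h1 : (fun i : Fin N =>
          (Fin.snoc (fun i => τ c i == ε c) (ε c) : Fin (N+1) → Bool) i.castSucc)
          = fun i => τ c i == ε c := by funext i; simp
      simp only [h1, Fin.snoc_last, Fin.snoc_castSucc]
      rw [flip_ham, flip_cav, ← mul_assoc (spin (ε c)), spin_mul_self, one_mul]
    simp only [hlast]
    rw [Finset.prod_congr rfl fun c _ => hexp c]
    rw [show ((∏ c : Fin s, spin (ε c) ^ replicaDegree s n c) * overlapMonomial N s n τ
          * ∏ c : Fin s, spin (ε c) ^ replicaDegree s n c)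
        = overlapMonomial N s n τ * ((∏ c : Fin s, spin (ε c) ^ replicaDegree s n c)
          * ∏ c : Fin s, spin (ε c) ^ replicaDegree s n c) from by ring, cancel, mul_one]
  simp only [inner]
  rw [Finset.sum_const, Finset.card_univ]
  simp [nsmul_eq_mul]

lemma gibbs_pointwise (N s : ℕ) (hN : 1 ≤ N) (β : ℝ) (hβ : 0 < β)
    (n : Fin s → Fin s → ℕ) (J : Fin (N+1) → Fin (N+1) → ℝ) :
    gibbsRepT N s (β * Real.sqrt ((N:ℝ)/((N:ℝ)+1))) (β^2 * (N:ℝ)/((N:ℝ)+1))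
      (fun i j => J i.castSucc j.castSucc) (fun i => J i.castSucc (Fin.last N))
      (overlapMonomial N s n)
    = gibbsRep (N+1) s β J
        (fun σ => overlapMonomialRes N s n σ
          * ∏ c : Fin s, spin (σ c (Fin.last N)) ^ replicaDegree s n c) := by
  unfold gibbsRep gibbsRepT
  rw [num_cavity N s hN β hβ n J, partZ_cavity N hN β hβ J, mul_pow]
  rw [mul_div_mul_left _ _ (by positivity : ((2:ℝ)^s) ≠ 0)]

/-- exact filling identity: with `β' = β√(N/(N+1))`,
`t' = β²N/(N+1)` and cavity fields `J_i = J_{i,N+1}` coming from the couplings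
of an `(N+1)`-spin system,
`⟨Q⟩_{N,t',β'} = E[Ω_{N+1,β}(Q^{(N)} Π_c (σ_{N+1}^c)^{d_c})]`;
in particular, if `Q` is fillable with only replicas `a`, `b` of odd degree,
`⟨Q⟩_{N,t',β'} = E[Ω_{N+1,β}(Q^{(N)} σ_{N+1}^a σ_{N+1}^b)]`. -/
theorem filling_identity (N s : ℕ) (hN : 1 ≤ N) (hs : 2 ≤ s)
    (β : ℝ) (hβ : 0 < β) (n : Fin s → Fin s → ℕ) :
    (∫ J, gibbsRepT N s (β * Real.sqrt ((N : ℝ) / ((N : ℝ) + 1)))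
          (β ^ 2 * N / ((N : ℝ) + 1))
          (fun i j => J i.castSucc j.castSucc)
          (fun i => J i.castSucc (Fin.last N))
          (overlapMonomial N s n) ∂(gaussJ (N + 1)))
      = ∫ J, gibbsRep (N + 1) s β J
          (fun σ => overlapMonomialRes N s n σ
            * ∏ c : Fin s, (spin (σ c (Fin.last N))) ^ (replicaDegree s n c))
          ∂(gaussJ (N + 1)) ∧
    (∀ a b : Fin s, a ≠ b →
      Odd (replicaDegree s n a) → Odd (replicaDegree s n b) →
      (∀ c : Fin s, c ≠ a → c ≠ b → Even (replicaDegree s n c)) →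
      (∫ J, gibbsRepT N s (β * Real.sqrt ((N : ℝ) / ((N : ℝ) + 1)))
            (β ^ 2 * N / ((N : ℝ) + 1))
            (fun i j => J i.castSucc j.castSucc)
            (fun i => J i.castSucc (Fin.last N))
            (overlapMonomial N s n) ∂(gaussJ (N + 1)))
        = ∫ J, gibbsRep (N + 1) s β J
            (fun σ => overlapMonomialRes N s n σ
              * spin (σ a (Fin.last N)) * spin (σ b (Fin.last N)))
            ∂(gaussJ (N + 1))) := by

  have key : (fun J : Fin (N+1) → Fin (N+1) → ℝ =>
      gibbsRepT N s (β * Real.sqrt ((N:ℝ)/((N:ℝ)+1))) (β^2 * (N:ℝ)/((N:ℝ)+1))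
        (fun i j => J i.castSucc j.castSucc) (fun i => J i.castSucc (Fin.last N))
        (overlapMonomial N s n))
      = fun J => gibbsRep (N+1) s β J
          (fun σ => overlapMonomialRes N s n σ
            * ∏ c : Fin s, spin (σ c (Fin.last N)) ^ replicaDegree s n c) :=
    funext fun J => gibbs_pointwise N s hN β hβ n J
  have main : (∫ J, gibbsRepT N s (β * Real.sqrt ((N : ℝ) / ((N : ℝ) + 1)))
          (β ^ 2 * N / ((N : ℝ) + 1))
          (fun i j => J i.castSucc j.castSucc)
          (fun i => J i.castSucc (Fin.last N))
          (overlapMonomial N s n) ∂(gaussJ (N + 1)))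
      = ∫ J, gibbsRep (N + 1) s β J
          (fun σ => overlapMonomialRes N s n σ
            * ∏ c : Fin s, (spin (σ c (Fin.last N))) ^ (replicaDegree s n c))
          ∂(gaussJ (N + 1)) :=
    congrArg (fun f : (Fin (N+1) → Fin (N+1) → ℝ) → ℝ => ∫ J, f J ∂(gaussJ (N+1))) key
  refine ⟨main, ?_⟩
  intro a b hab ha hb hc
  rw [main]
  have hF : (fun σ : Fin s → Fin (N+1) → Bool =>
        overlapMonomialRes N s n σ * spin (σ a (Fin.last N)) * spin (σ b (Fin.last N)))
      = fun σ => overlapMonomialRes N s n σ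
          * ∏ c : Fin s, spin (σ c (Fin.last N)) ^ replicaDegree s n c := by
    funext σ
    have h1 : ∀ c ∈ Finset.univ, c ∉ ({a, b} : Finset (Fin s)) →
        spin (σ c (Fin.last N)) ^ replicaDegree s n c = 1 := by
      intro c _ hcm
      simp only [Finset.mem_insert, Finset.mem_singleton, not_or] at hcm
      exact spin_pow_even (hc c hcm.1 hcm.2) _
    have hprod : (∏ c : Fin s, spin (σ c (Fin.last N)) ^ replicaDegree s n c)
        = spin (σ a (Fin.last N)) * spin (σ b (Fin.last N)) := by
      rw [← Finset.prod_subset (Finset.subset_univ _) h1, Finset.prod_pair hab,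
        spin_pow_odd ha, spin_pow_odd hb]
    rw [hprod, ← mul_assoc]
  exact congrArg (fun F => ∫ J, gibbsRep (N+1) s β J F ∂(gaussJ (N+1))) hF.symm
end
end
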